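/- arXiv:1710.04016 — 2 statements merged into one kernel-verified Lean document; each statement's English description precedes it below -/
import Mathlib

section
/- Let ε > 0, let s be a complex number with Re(s) > 0, and set λ₊ = √(s²/(1 + ε s²)) (principal square root). Let x_r ∈ ℝ and suppose W : [x_r, ∞) → ℂ is twice continuously differentiable, bounded, and satisfies on [x_r, ∞) the equation s²(W − ε W'') − W'' = 0. Then W'(x_r) = −λ₊ · W(x_r). -/
/-!
Dividing by `1 + ε s²`, the equation reads `W'' = λ² W` with `λ² = s² / (1 + ε s²)`. For
`Re s > 0` and `ε ≥ 0` this `λ²` avoids `(-∞, 0]`, so its principal square root `λ` has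
`Re λ > 0`. Then `W' + λ W` solves `u' = λ u`, hence grows like `exp ((Re λ) x)` unless it
vanishes, while `W' - λ W` solves `v' = -λ v` and stays bounded. Since
`2 λ W = (W' + λ W) - (W' - λ W)` is bounded, `W' + λ W` vanishes identically, in particular
at `x_r`.
-/

open Set Filter

namespace Complex

lemma sq_mem_slitPlane_of_re_pos {z : ℂ} (hz : 0 < z.re) : z ^ 2 ∈ slitPlane := by
  rw [mem_slitPlane_iff, sq, mul_re, mul_im]
  by_cases him : z.im = 0
  · left
    simp only [him, mul_zero, sub_zero]
    positivity
  · right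
    rw [show z.re * z.im + z.im * z.re = 2 * z.re * z.im by ring]
    exact mul_ne_zero (mul_ne_zero two_ne_zero hz.ne') him

lemma inv_mem_slitPlane {z : ℂ} (hz : z ∈ slitPlane) : z⁻¹ ∈ slitPlane := by
  have hn : 0 < normSq z := normSq_pos.2 (slitPlane_ne_zero hz)
  rw [mem_slitPlane_iff, inv_re, inv_im] at *
  rcases hz with h | h
  · left; positivity
  · right; simp [h, hn.ne']

lemma add_ofReal_mem_slitPlane {z : ℂ} (hz : z ∈ slitPlane) {r : ℝ} (hr : 0 ≤ r) :
    z + r ∈ slitPlane := by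
  rw [mem_slitPlane_iff, add_re, ofReal_re, add_im, ofReal_im, add_zero] at *
  exact hz.imp (fun h => by linarith) id

lemma sq_div_one_add_mul_sq_mem_slitPlane {s : ℂ} (hs : 0 < s.re) {ε : ℝ} (hε : 0 ≤ ε) :
    s ^ 2 / (1 + ε * s ^ 2) ∈ slitPlane := by
  have hs0 : s ≠ 0 := fun h => by simp [h] at hs
  -- `s² / (1 + ε s²) = (s⁻² + ε)⁻¹`, and `s⁻¹` also lies in the right half-plane.
  rw [← inv_div, show (1 + ε * s ^ 2) / s ^ 2 = (s⁻¹) ^ 2 + ε by field_simp]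
  exact inv_mem_slitPlane (add_ofReal_mem_slitPlane
    (sq_mem_slitPlane_of_re_pos (by simpa using div_pos hs (normSq_pos.2 hs0))) hε)

lemma re_cpow_inv_two_pos {z : ℂ} (hz : z ∈ slitPlane) : 0 < (z ^ (2⁻¹ : ℂ)).re := by
  rw [cpow_inv_two_re, Real.sqrt_pos, mem_slitPlane_iff] at *
  rcases hz with h | h
  · linarith [norm_nonneg z]
  · linarith [neg_abs_le z.re, abs_re_lt_norm.2 h]

end Complex

open Complex

lemma eq_mul_exp_of_hasDerivWithinAt_Ici {c : ℂ} {f : ℝ → ℂ} {a : ℝ}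
    (hf : ∀ x ∈ Ici a, HasDerivWithinAt f (c * f x) (Ici a) x) {x : ℝ} (hx : x ∈ Ici a) :
    f x = f a * exp (c * (x - a)) := by
  set g : ℝ → ℂ := fun y => f y * exp (-(c * (y - a)))
  have hg : ∀ y ∈ Ici a, HasDerivWithinAt g 0 (Ici a) y := by
    intro y hy
    have hexp : HasDerivAt (fun y : ℝ => exp (-(c * (y - a)))) (exp (-(c * (y - a))) * -c) y :=
      (((((hasDerivAt_id y).ofReal_comp).sub_const (a : ℂ)).const_mul c).neg.cexp).congr_deriv
        (by simp)
    exact ((hf y hy).mul hexp.hasDerivWithinAt).congr_deriv (by ring)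
  have hconst : g x = g a := constant_of_has_deriv_right_zero
    (fun y hy => (hg y hy.1).continuousWithinAt.mono Icc_subset_Ici_self)
    (fun y hy => (hg y hy.1).mono (Ici_subset_Ici.2 hy.1)) x ⟨hx, le_rfl⟩
  simpa [g, mul_assoc, ← exp_add] using congrArg (· * exp (c * (x - a))) hconst

lemma norm_eq_mul_exp_of_hasDerivWithinAt_Ici {c : ℂ} {f : ℝ → ℂ} {a : ℝ}
    (hf : ∀ x ∈ Ici a, HasDerivWithinAt f (c * f x) (Ici a) x) {x : ℝ} (hx : x ∈ Ici a) :
    ‖f x‖ = ‖f a‖ * Real.exp (c.re * (x - a)) := by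
  rw [eq_mul_exp_of_hasDerivWithinAt_Ici hf hx, norm_mul, norm_exp, ← ofReal_sub, re_mul_ofReal]

lemma norm_le_of_hasDerivWithinAt_Ici {c : ℂ} (hc : c.re ≤ 0) {f : ℝ → ℂ} {a : ℝ}
    (hf : ∀ x ∈ Ici a, HasDerivWithinAt f (c * f x) (Ici a) x) {x : ℝ} (hx : x ∈ Ici a) :
    ‖f x‖ ≤ ‖f a‖ := by
  rw [norm_eq_mul_exp_of_hasDerivWithinAt_Ici hf hx]
  exact mul_le_of_le_one_right (norm_nonneg _)
    (Real.exp_le_one_iff.2 (mul_nonpos_of_nonpos_of_nonneg hc (sub_nonneg.2 hx)))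

lemma eq_zero_of_hasDerivWithinAt_Ici_of_bounded {c : ℂ} (hc : 0 < c.re) {f : ℝ → ℂ} {a : ℝ}
    (hf : ∀ x ∈ Ici a, HasDerivWithinAt f (c * f x) (Ici a) x)
    (hbd : ∃ M, ∀ x ∈ Ici a, ‖f x‖ ≤ M) : f a = 0 := by
  by_contra hfa
  obtain ⟨M, hM⟩ := hbd
  have hgrow : Tendsto (fun x => ‖f a‖ * Real.exp (c.re * (x - a))) atTop atTop :=
    (Real.tendsto_exp_atTop.comp ((tendsto_atTop_add_const_right _ (-a) tendsto_id).const_mul_atTop hc)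
      |>.const_mul_atTop (norm_pos_iff.2 hfa))
  obtain ⟨x, hxM, hx⟩ := ((hgrow.eventually_gt_atTop M).and (eventually_ge_atTop a)).exists
  have := norm_eq_mul_exp_of_hasDerivWithinAt_Ici hf hx
  linarith [hM x hx]

lemma eq_neg_mul_of_hasDerivWithinAt_sq_mul_of_bounded {c : ℂ} (hc : 0 < c.re) {f f' : ℝ → ℂ}
    {a : ℝ} (hf : ∀ x ∈ Ici a, HasDerivWithinAt f (f' x) (Ici a) x)
    (hf' : ∀ x ∈ Ici a, HasDerivWithinAt f' (c ^ 2 * f x) (Ici a) x)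
    (hbd : ∃ M, ∀ x ∈ Ici a, ‖f x‖ ≤ M) : f' a = -c * f a := by
  obtain ⟨M, hM⟩ := hbd
  have hgrowing : ∀ x ∈ Ici a,
      HasDerivWithinAt (fun y => f' y + c * f y) (c * (f' x + c * f x)) (Ici a) x :=
    fun x hx => ((hf' x hx).add ((hf x hx).const_mul c)).congr_deriv (by ring)
  have hdecaying : ∀ x ∈ Ici a,
      HasDerivWithinAt (fun y => f' y - c * f y) (-c * (f' x - c * f x)) (Ici a) x :=
    fun x hx => ((hf' x hx).sub ((hf x hx).const_mul c)).congr_deriv (by ring)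
  -- `f' + c f = 2 c f + (f' - c f)` is bounded, since `f' - c f` decays.
  have hbd : ∀ x ∈ Ici a, ‖f' x + c * f x‖ ≤ 2 * ‖c‖ * M + ‖f' a - c * f a‖ := fun x hx =>
    calc ‖f' x + c * f x‖ = ‖2 * c * f x + (f' x - c * f x)‖ := by ring_nf
      _ ≤ ‖2 * c * f x‖ + ‖f' x - c * f x‖ := norm_add_le _ _
      _ ≤ 2 * ‖c‖ * M + ‖f' a - c * f a‖ := by
        rw [norm_mul, norm_mul, Complex.norm_two]
        gcongr
        · exact hM x hx
        · exact norm_le_of_hasDerivWithinAt_Ici (by simpa using hc.le) hdecaying hx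
  linear_combination eq_zero_of_hasDerivWithinAt_Ici_of_bounded hc hgrowing ⟨_, hbd⟩

/-- Half-line characterization of bounded solutions of the Laplace-transformed
linearized Boussinesq equation `s²(W − ε W'') − W'' = 0` on `[x_r, ∞)`: any such
bounded solution satisfies `W'(x_r) = −λ₊ W(x_r)` with `λ₊ = √(s²/(1 + ε s²))`
(principal square root). -/
theorem stmt_7 (ε : ℝ) (hε : 0 < ε) (s : ℂ) (hs : 0 < s.re) (xr : ℝ)
    (W : ℝ → ℂ)
    (hW : ContDiffOn ℝ 2 W (Set.Ici xr))
    (hWbd : ∃ M : ℝ, ∀ x ∈ Set.Ici xr, ‖W x‖ ≤ M)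
    (heq : ∀ x ∈ Set.Ici xr,
      s ^ 2 * (W x - (ε : ℂ) * derivWithin (derivWithin W (Set.Ici xr)) (Set.Ici xr) x)
        - derivWithin (derivWithin W (Set.Ici xr)) (Set.Ici xr) x = 0) :
    derivWithin W (Set.Ici xr) xr
      = -((s ^ 2 / (1 + (ε : ℂ) * s ^ 2)) ^ (1 / 2 : ℂ)) * W xr := by
  set μ := s ^ 2 / (1 + (ε : ℂ) * s ^ 2)
  have hμ : μ ∈ slitPlane := sq_div_one_add_mul_sq_mem_slitPlane hs hε.le
  have hden : 1 + (ε : ℂ) * s ^ 2 ≠ 0 := (div_ne_zero_iff.1 (slitPlane_ne_zero hμ)).2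
  have hsq : (μ ^ (1 / 2 : ℂ)) ^ 2 = μ := by rw [one_div, cpow_ofNat_inv_pow]
  refine eq_neg_mul_of_hasDerivWithinAt_sq_mul_of_bounded (by simpa using re_cpow_inv_two_pos hμ)
    (fun x hx => (hW.differentiableOn two_ne_zero x hx).hasDerivWithinAt) (fun x hx => ?_) hWbd
  refine (((hW.derivWithin (uniqueDiffOn_Ici xr) (m := 1) (by norm_num)).differentiableOn
    one_ne_zero) x hx |>.hasDerivWithinAt).congr_deriv ?_
  rw [hsq, div_mul_eq_mul_div, eq_div_iff hden]
  linear_combination -heq x hx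
end

section
/- Let ε > 0, δx > 0, δt > 0, let z be a complex number with |z| > 1, and set s = s(z) = (2/δt)·(z − 1)/(z + 1). Then the quadratic polynomial P(r) = (1 + ε s²) r² − 2(1 + s²(ε + δx²/2)) r + (1 + ε s²) has two roots r₊, r₋ (it has degree exactly 2), their product equals 1, and up to ordering they satisfy |r₊| > 1 and |r₋| < 1. -/
/-! The Cayley map `z ↦ (z - 1)/(z + 1)` sends `‖z‖ > 1` into the right half-plane, so
`s² ∉ (-∞, 0]`. The polynomial is palindromic, hence its roots are `r` and `r⁻¹`, and it suffices
that no root is unimodular. A root `ρ` with `‖ρ‖ = 1` would give `ρ + ρ⁻¹ = 2 Re ρ`, forcing the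
ratio of the middle and leading coefficients to be a real `β ≤ 1`; solving for `s²` then exhibits
it as a real `≤ 0`. -/

open Complex ComplexConjugate

/-- The Crank–Nicolson symbol `s(z) = (2/δt)·(z-1)/(z+1)`. -/
noncomputable def sCN (δt : ℝ) (z : ℂ) : ℂ := (2 / (δt : ℂ)) * (z - 1) / (z + 1)

namespace Complex

lemma re_sub_one_div_add_one_pos {z : ℂ} (hz : 1 < ‖z‖) : 0 < ((z - 1) / (z + 1)).re := by
  have hz1 : z + 1 ≠ 0 := by
    rintro h
    rw [eq_neg_of_add_eq_zero_left h, norm_neg, norm_one] at hz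
    exact lt_irrefl 1 hz
  have hre : ((z - 1) / (z + 1)).re = (normSq z - 1) / normSq (z + 1) := by
    rw [div_re]
    simp only [sub_re, sub_im, add_re, add_im, one_re, one_im, normSq_apply]
    ring
  rw [hre]
  have hnz : 1 < normSq z := by
    rw [normSq_eq_norm_sq]
    nlinarith
  exact div_pos (by linarith) (normSq_pos.mpr hz1)

lemma sq_mem_slitPlane {s : ℂ} (hs : s.re ≠ 0) : s ^ 2 ∈ slitPlane := by
  rw [mem_slitPlane_iff, sq, mul_re, mul_im]
  by_cases him : s.im = 0
  · left
    rw [him]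
    simpa using hs
  · right
    rw [mul_comm s.im, ← two_mul]
    exact mul_ne_zero two_ne_zero (mul_ne_zero hs him)

lemma one_add_ofReal_mul_ne_zero {ε : ℝ} {w : ℂ} (hε : 0 ≤ ε) (hw : w ∈ slitPlane) :
    1 + (ε : ℂ) * w ≠ 0 := by
  intro h
  have hε0 : (ε : ℂ) ≠ 0 := by
    rintro hε0
    simp [hε0] at h
  have hw' : w = ((-ε⁻¹ : ℝ) : ℂ) := by
    push_cast
    field_simp
    linear_combination h
  rw [hw', ofReal_mem_slitPlane, neg_pos] at hw
  exact (inv_nonneg.mpr hε).not_gt hw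

lemma eq_re_mul_of_root_of_norm_eq_one {a c ρ : ℂ} (hρ : ‖ρ‖ = 1)
    (h : a * ρ ^ 2 - 2 * c * ρ + a = 0) : c = ρ.re * a := by
  have hconj : ρ * conj ρ = 1 := by
    rw [mul_conj, normSq_eq_norm_sq, hρ]
    norm_num
  have hre : ρ + conj ρ = 2 * ρ.re := by
    rw [add_conj]
    push_cast
    ring
  linear_combination (-(1 / 2) * conj ρ) * h + ((a * ρ - 2 * c) / 2) * hconj + (a / 2) * hre

lemma exists_palindromic_factorization {a c : ℂ} (ha : a ≠ 0) :
    ∃ x y : ℂ, (∀ r : ℂ, a * r ^ 2 - 2 * c * r + a = a * (r - x) * (r - y)) ∧ x * y = 1 := by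
  obtain ⟨d, hd⟩ := IsAlgClosed.exists_pow_nat_eq ((c / a) ^ 2 - 1) two_pos
  refine ⟨c / a + d, c / a - d, fun r => ?_, by linear_combination -hd⟩
  have hc : c = a * (c / a) := by field_simp
  linear_combination (-2 * r) * hc + a * hd

lemma exists_palindromic_factorization_of_norm_ne_one {a c : ℂ} (ha : a ≠ 0)
    (h : ∀ ρ : ℂ, ‖ρ‖ = 1 → a * ρ ^ 2 - 2 * c * ρ + a ≠ 0) :
    ∃ rp rm : ℂ, (∀ r : ℂ, a * r ^ 2 - 2 * c * r + a = a * (r - rp) * (r - rm)) ∧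
      rp * rm = 1 ∧ 1 < ‖rp‖ ∧ ‖rm‖ < 1 := by
  obtain ⟨x, y, hfac, hxy⟩ := exists_palindromic_factorization (c := c) ha
  have hnorm : ‖x‖ * ‖y‖ = 1 := by rw [← norm_mul, hxy, norm_one]
  have hx : ‖x‖ ≠ 1 := fun hx => h x hx (by rw [hfac]; ring)
  rcases hx.lt_or_gt with hlt | hgt
  · refine ⟨y, x, fun r => by rw [hfac]; ring, by rw [mul_comm, hxy], ?_, hlt⟩
    nlinarith [norm_nonneg x]
  · exact ⟨x, y, hfac, hxy, hgt, by nlinarith [norm_nonneg y]⟩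

lemma one_add_mul_ne_ofReal_mul {ε κ β : ℝ} {w : ℂ} (hε : 0 ≤ ε) (hκ : 0 < κ)
    (hw : w ∈ slitPlane) (hβ : β ≤ 1) :
    1 + w * ((ε : ℂ) + κ) ≠ β * (1 + ε * w) := by
  intro h
  have hD : 0 < ε * (1 - β) + κ := by nlinarith
  have hw' : w = (((β - 1) / (ε * (1 - β) + κ) : ℝ) : ℂ) := by
    have hD' : ((ε * (1 - β) + κ : ℝ) : ℂ) ≠ 0 := by exact_mod_cast hD.ne'
    push_cast at hD' ⊢
    field_simp
    linear_combination h
  rw [hw', ofReal_mem_slitPlane] at hw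
  have : (β - 1) / (ε * (1 - β) + κ) ≤ 0 := div_nonpos_of_nonpos_of_nonneg (by linarith) hD.le
  linarith

end Complex

lemma sCN_re_pos {δt : ℝ} {z : ℂ} (hδt : 0 < δt) (hz : 1 < ‖z‖) : 0 < (sCN δt z).re := by
  have : sCN δt z = ((2 / δt : ℝ) : ℂ) * ((z - 1) / (z + 1)) := by
    rw [sCN]
    push_cast
    ring
  rw [this, re_ofReal_mul]
  exact mul_pos (by positivity) (re_sub_one_div_add_one_pos hz)

/-- For `|z| > 1`, the quadratic `P(r) = (1 + εs²) r² − 2(1 + s²(ε + δx²/2)) r + (1 + εs²)`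
with `s = s(z)` has degree exactly two (nonvanishing leading coefficient) and two roots
`r₊, r₋` with product `1` satisfying `|r₊| > 1 > |r₋|`. -/
theorem stmt_9 (ε δx δt : ℝ) (hε : 0 < ε) (hδx : 0 < δx) (hδt : 0 < δt)
    (z : ℂ) (hz : 1 < ‖z‖) :
    1 + (ε : ℂ) * (sCN δt z) ^ 2 ≠ 0 ∧
    ∃ rp rm : ℂ,
      (∀ r : ℂ,
        (1 + (ε : ℂ) * (sCN δt z) ^ 2) * r ^ 2
          - 2 * (1 + (sCN δt z) ^ 2 * ((ε : ℂ) + (δx : ℂ) ^ 2 / 2)) * r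
          + (1 + (ε : ℂ) * (sCN δt z) ^ 2)
        = (1 + (ε : ℂ) * (sCN δt z) ^ 2) * (r - rp) * (r - rm)) ∧
      rp * rm = 1 ∧ 1 < ‖rp‖ ∧ ‖rm‖ < 1 := by
  have hw : sCN δt z ^ 2 ∈ slitPlane := sq_mem_slitPlane (sCN_re_pos hδt hz).ne'
  have ha : 1 + (ε : ℂ) * sCN δt z ^ 2 ≠ 0 := one_add_ofReal_mul_ne_zero hε.le hw
  refine ⟨ha, exists_palindromic_factorization_of_norm_ne_one ha fun ρ hρ hroot => ?_⟩
  have hβ : ρ.re ≤ 1 := (re_le_norm ρ).trans hρ.le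
  have hc := one_add_mul_ne_ofReal_mul (κ := δx ^ 2 / 2) hε.le (by positivity) hw hβ
  push_cast at hc
  exact hc (eq_re_mul_of_root_of_norm_eq_one hρ hroot)
end
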